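/- arXiv:math/0408041 — 2 statements merged into one kernel-verified Lean document; each statement's English description precedes it below -/
import Mathlib

section
/- Let $U\subset\mathbb{C}$ be a domain (open connected set) and suppose there exists an unbounded closed connected set $A\subset U$. Then $\infty$ is accessible from $U$; that is, there exists a curve $\gamma\colon[0,\infty)\to U$ with $|\gamma(t)|\to\infty$ as $t\to\infty$. -/
/-!
Pass to the one-point compactification, where `A ∪ {∞}` is a continuum. Applying the boundary
bumping theorem twice (once around `∞`, once around a finite point) shows that for every compact
`K` there is a closed connected noncompact `B ⊆ A \ K`. Iterating with `K = closedBall 0 n` gives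
nested continua `B n` lying in `U ∩ {n < ‖z‖}`; consecutive points `c n ∈ B n`, `c (n + 1) ∈ B n`
can be joined by a path in that open set, and these paths concatenate to a curve going to `∞`.
-/

open Filter Topology Set

theorem IsClosed.connectedComponentIn {X : Type*} [TopologicalSpace X] {F : Set X}
    (hF : IsClosed F) (x : X) : IsClosed (connectedComponentIn F x) := by
  by_cases hx : x ∈ F
  · exact closure_subset_iff_isClosed.1 <|
      isPreconnected_connectedComponentIn.closure.subset_connectedComponentIn
        (subset_closure (mem_connectedComponentIn hx))
        (closure_minimal (connectedComponentIn_subset F x) hF)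
  · rw [connectedComponentIn_eq_empty hx]
    exact isClosed_empty

/-- Šura-Bura: in the compact Hausdorff space `K` the component of `x` is the intersection of its
clopen neighbourhoods, so one of these already lies in `O`. -/
theorem IsCompact.exists_isOpen_isClosed_inter_subset {X : Type*} [TopologicalSpace X]
    [T2Space X] {K O : Set X} {x : X} (hK : IsCompact K) (hx : x ∈ K) (hO : IsOpen O)
    (hKO : connectedComponentIn K x ⊆ O) :
    ∃ W, IsOpen W ∧ x ∈ W ∧ IsClosed (K ∩ W) ∧ K ∩ W ⊆ O := by
  have : CompactSpace K := isCompact_iff_compactSpace.mp hK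
  let x' : K := ⟨x, hx⟩
  have : Nonempty {s : Set K // IsClopen s ∧ x' ∈ s} := ⟨⟨univ, isClopen_univ, mem_univ _⟩⟩
  have hdir : Directed (· ⊇ ·) fun s : {s : Set K // IsClopen s ∧ x' ∈ s} => s.1 :=
    fun s t => ⟨⟨s.1 ∩ t.1, s.2.1.inter t.2.1, s.2.2, t.2.2⟩, inter_subset_left,
      inter_subset_right⟩
  have hnhds : ∀ y ∈ ⋂ s : {s : Set K // IsClopen s ∧ x' ∈ s}, s.1,
      Subtype.val ⁻¹' O ∈ 𝓝 y := by
    intro y hy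
    rw [← connectedComponent_eq_iInter_isClopen] at hy
    refine (hO.preimage continuous_subtype_val).mem_nhds (hKO ?_)
    rw [connectedComponentIn_eq_image hx]
    exact mem_image_of_mem _ hy
  obtain ⟨⟨E, hE, hxE⟩, hEO⟩ := exists_subset_nhds_of_compactSpace hdir (fun s => s.2.1.1) hnhds
  obtain ⟨W, hW, rfl⟩ := isOpen_induced_iff.mp hE.isOpen
  refine ⟨W, hW, hxE, ?_, ?_⟩
  · rw [← Subtype.image_preimage_coe]
    exact (hE.isClosed.isCompact.image continuous_subtype_val).isClosed
  · rintro y ⟨hyK, hyW⟩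
    exact hEO (show (⟨y, hyK⟩ : K) ∈ Subtype.val ⁻¹' W from hyW)

/-- The boundary bumping theorem. -/
theorem IsCompact.not_closure_connectedComponentIn_subset {X : Type*} [TopologicalSpace X]
    [T2Space X] {S V : Set X} {x : X} (hSc : IsCompact S) (hS : IsPreconnected S)
    (hV : IsOpen V) (hx : x ∈ S ∩ V) (hSV : ¬S ⊆ V) :
    ¬closure (connectedComponentIn (S ∩ V) x) ⊆ V := by
  set D := connectedComponentIn (S ∩ V) x
  intro hDV
  have hDS : D ⊆ S := (connectedComponentIn_subset _ _).trans inter_subset_left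
  have hDcl : IsClosed D := closure_subset_iff_isClosed.1 <|
    isPreconnected_connectedComponentIn.closure.subset_connectedComponentIn
      (subset_closure (mem_connectedComponentIn hx))
      (subset_inter (closure_minimal hDS hSc.isClosed) hDV)
  obtain ⟨O, O', hO, hO', hDO, hSVO', hOO'⟩ := SeparatedNhds.of_isCompact_isCompact
    (hSc.of_isClosed_subset hDcl hDS) (hSc.diff hV)
    (disjoint_sdiff_right.mono_left (subset_closure.trans hDV))
  have hxO : x ∈ O := hDO (mem_connectedComponentIn hx)
  have hKSV : S \ O' ⊆ S ∩ V := fun y hy => ⟨hy.1, by_contra fun hyV => hy.2 (hSVO' ⟨hy.1, hyV⟩)⟩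
  have hxK : x ∈ S \ O' := ⟨hx.1, hOO'.notMem_of_mem_left hxO⟩
  obtain ⟨W, hW, hxW, hKWcl, hKWO⟩ := (hSc.diff hO').exists_isOpen_isClosed_inter_subset hxK hO
    ((isPreconnected_connectedComponentIn.subset_connectedComponentIn
      (mem_connectedComponentIn hxK) ((connectedComponentIn_subset _ _).trans hKSV)).trans hDO)
  have hSO : S ⊆ O ∩ W := by
    refine ((isPreconnected_iff_subset_of_disjoint.1 hS) _ _ (hO.inter hW)
      hKWcl.isOpen_compl (fun y _ => ?_) ?_).resolve_right fun h => h hx.1 ⟨hxK, hxW⟩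
    · by_cases hy : y ∈ (S \ O') ∩ W
      · exact Or.inl ⟨hKWO hy, hy.2⟩
      · exact Or.inr hy
    · ext y
      simp only [mem_inter_iff, mem_compl_iff, mem_empty_iff_false, iff_false]
      rintro ⟨hyS, ⟨hyO, hyW⟩, hyK⟩
      exact hyK ⟨⟨hyS, hOO'.notMem_of_mem_left hyO⟩, hyW⟩
  exact hSV fun y hyS => by_contra fun hyV =>
    hOO'.notMem_of_mem_left (hSO hyS).1 (hSVO' ⟨hyS, hyV⟩)

namespace OnePoint

variable {X : Type*} [TopologicalSpace X]

theorem infty_mem_closure_image_coe_iff {C : Set X} (hC : IsClosed C) :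
    ∞ ∈ closure (((↑) : X → OnePoint X) '' C) ↔ ¬IsCompact C := by
  constructor
  · intro h hCc
    rw [(isClosed_image_coe.2 ⟨hC, hCc⟩).closure_eq] at h
    exact infty_notMem_image_coe h
  · refine fun hCnc => by_contra fun h => ?_
    have hcl := (isClosed_iff_of_notMem h).1 isClosed_closure
    exact hCnc (hcl.2.of_isClosed_subset hC
      ((preimage_image_eq C coe_injective).symm.subset.trans (preimage_mono subset_closure)))

variable [T2Space X] [WeaklyLocallyCompactSpace X]

theorem not_isCompact_connectedComponentIn_preimage {E : Set (OnePoint X)} (hE : IsClosed E)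
    (hEc : IsPreconnected E) (hinf : ∞ ∈ E) {x : X} (hx : (x : OnePoint X) ∈ E) :
    ¬IsCompact (connectedComponentIn (((↑) : X → OnePoint X) ⁻¹' E) x) := by
  set D := connectedComponentIn (E ∩ {∞}ᶜ) (x : OnePoint X)
  have hDrange : D ⊆ range ((↑) : X → OnePoint X) :=
    compl_infty (X := X) ▸ (connectedComponentIn_subset _ _).trans inter_subset_right
  have hD : D ⊆ (↑) '' connectedComponentIn (((↑) : X → OnePoint X) ⁻¹' E) x := by
    rw [← image_preimage_eq_of_subset hDrange]
    refine image_mono (IsPreconnected.subset_connectedComponentIn ?_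
      (mem_connectedComponentIn (⟨hx, coe_ne_infty x⟩ : (x : OnePoint X) ∈ E ∩ {∞}ᶜ))
      (preimage_mono ((connectedComponentIn_subset _ _).trans inter_subset_left)))
    rw [← isOpenEmbedding_coe.isInducing.isPreconnected_image, image_preimage_eq_of_subset hDrange]
    exact isPreconnected_connectedComponentIn
  have hbump := hE.isCompact.not_closure_connectedComponentIn_subset hEc isClosed_infty.isOpen_compl
    ⟨hx, coe_ne_infty x⟩ fun h => h hinf rfl
  rw [← infty_mem_closure_image_coe_iff ((hE.preimage continuous_coe).connectedComponentIn x)]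
  obtain ⟨y, hyD, hy⟩ := not_subset.1 hbump
  rw [mem_compl_singleton_iff, not_not] at hy
  exact closure_mono hD (hy ▸ hyD)

end OnePoint

open OnePoint in
theorem exists_isClosed_isConnected_not_isCompact_subset_diff {X : Type*}
    [TopologicalSpace X] [T2Space X] [WeaklyLocallyCompactSpace X] {A K : Set X}
    (hA : IsClosed A) (hAc : IsConnected A) (hAnc : ¬IsCompact A) (hK : IsCompact K) :
    ∃ B ⊆ A \ K, IsClosed B ∧ IsConnected B ∧ ¬IsCompact B := by
  -- bumping off a compact neighbourhood `K'` of `K` keeps the closure of the component off `K`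
  obtain ⟨K', hK'c, hKK'⟩ := exists_compact_superset hK
  by_cases hAK' : Disjoint A K'
  · exact ⟨A, fun z hz => ⟨hz, fun hzK => hAK'.notMem_of_mem_left hz (interior_subset (hKK' hzK))⟩,
      hA, hAc, hAnc⟩
  set ι : X → OnePoint X := (↑)
  set S := closure (ι '' A)
  set V := (ι '' K')ᶜ
  have hinfS : ∞ ∈ S := (infty_mem_closure_image_coe_iff hA).2 hAnc
  have hinfV : ∞ ∈ V := infty_notMem_image_coe
  have hSV : ¬S ⊆ V := by
    obtain ⟨a, haA, haK'⟩ := not_disjoint_iff.1 hAK'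
    exact fun h => h (subset_closure (mem_image_of_mem ι haA)) (mem_image_of_mem ι haK')
  set E := closure (connectedComponentIn (S ∩ V) ∞)
  have hEV : ¬E ⊆ V := isClosed_closure.isCompact.not_closure_connectedComponentIn_subset
    (hAc.isPreconnected.image ι continuous_coe.continuousOn).closure
    (isOpen_compl_image_coe.2 ⟨hK'c.isClosed, hK'c⟩) ⟨hinfS, hinfV⟩ hSV
  obtain ⟨q, hqE, hqV⟩ := not_subset.1 hEV
  lift q to X using fun h => hqV (h ▸ hinfV)
  have hEA : ι ⁻¹' E ⊆ A \ K := by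
    have hE : E ⊆ S ∩ (ι '' interior K')ᶜ := closure_minimal
      ((connectedComponentIn_subset _ _).trans (inter_subset_inter_right _
        (compl_subset_compl.2 (image_mono interior_subset))))
      (isClosed_closure.inter (isOpen_image_coe.2 isOpen_interior).isClosed_compl)
    intro z hz
    refine ⟨?_, fun hzK => (hE hz).2 (mem_image_of_mem ι (hKK' hzK))⟩
    rw [← hA.closure_eq, ← preimage_image_eq A coe_injective,
      ← isOpenMap_coe.preimage_closure_eq_closure_preimage continuous_coe]
    exact (hE hz).1
  refine ⟨connectedComponentIn (ι ⁻¹' E) q, (connectedComponentIn_subset _ _).trans hEA,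
    (isClosed_closure.preimage continuous_coe).connectedComponentIn q,
    isConnected_connectedComponentIn_iff.2 hqE, ?_⟩
  exact not_isCompact_connectedComponentIn_preimage isClosed_closure
    isPreconnected_connectedComponentIn.closure
    (subset_closure (mem_connectedComponentIn (mem_inter hinfS hinfV))) hqE

theorem exists_antitone_isConnected_subset_diff {X : Type*} [TopologicalSpace X] [T2Space X]
    [WeaklyLocallyCompactSpace X] {A : Set X} (hA : IsClosed A) (hAc : IsConnected A)
    (hAnc : ¬IsCompact A) {K : ℕ → Set X} (hK : ∀ n, IsCompact (K n)) :
    ∃ B : ℕ → Set X, Antitone B ∧ ∀ n, B n ⊆ A \ K n ∧ IsConnected (B n) := by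
  let C := {S : Set X // IsClosed S ∧ IsConnected S ∧ ¬IsCompact S}
  have hexists : ∀ (n : ℕ) (S : C), ∃ T : C, T.1 ⊆ S.1 \ K n := fun n S => by
    obtain ⟨T, hTS, hT⟩ := exists_isClosed_isConnected_not_isCompact_subset_diff
      S.2.1 S.2.2.1 S.2.2.2 (hK n)
    exact ⟨⟨T, hT⟩, hTS⟩
  choose step hstep using hexists
  let B : ℕ → C := fun n => Nat.rec (step 0 ⟨A, hA, hAc, hAnc⟩) (fun k S => step (k + 1) S) n
  have hB : Antitone fun n => (B n).1 :=
    antitone_nat_of_succ_le fun n => (hstep (n + 1) (B n)).trans sdiff_subset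
  refine ⟨fun n => (B n).1, hB, fun n => ⟨subset_sdiff.2 ⟨(hB n.zero_le).trans ?_, ?_⟩, (B n).2.2.1⟩⟩
  · exact (hstep 0 _).trans sdiff_subset
  · cases n with
    | zero => exact (subset_sdiff.1 (hstep 0 _)).2
    | succ k => exact (subset_sdiff.1 (hstep (k + 1) (B k))).2

theorem joinedIn_of_isPreconnected_of_isOpen {X : Type*} [TopologicalSpace X]
    [LocallyPathConnectedSpace X] {B O : Set X} (hB : IsPreconnected B) (hO : IsOpen O)
    (hBO : B ⊆ O) {x y : X} (hx : x ∈ B) (hy : y ∈ B) : JoinedIn O x y := by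
  have hW : IsPathConnected (connectedComponentIn O x) :=
    hO.connectedComponentIn.isConnected_iff_isPathConnected.1
      (isConnected_connectedComponentIn_iff.2 (hBO hx))
  have hBW := hB.subset_connectedComponentIn hx hBO
  exact (hW.joinedIn x (hBW hx) y (hBW hy)).mono (connectedComponentIn_subset O x)

theorem exists_continuous_mem_floor_of_joinedIn {X : Type*} [TopologicalSpace X] {x : ℕ → X}
    {S : ℕ → Set X} (h : ∀ n, JoinedIn (S n) (x n) (x (n + 1))) :
    ∃ γ : ℝ → X, Continuous γ ∧ ∀ t, γ t ∈ S ⌊t⌋₊ := by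
  choose P hP using h
  let g : ℕ → ℝ → X := fun n t => (P n).extend (t - n)
  have hg : ∀ n, Continuous (g n) := fun n => (P n).continuous_extend.comp (continuous_sub_right _)
  have hg_left : ∀ n : ℕ, g n n = x n := fun n => by
    simp only [g, sub_self, Path.extend_zero]
  have hg_right : ∀ n : ℕ, g n (n + 1) = x (n + 1) := fun n => by
    simp only [g, add_sub_cancel_left, Path.extend_one]
  set γ : ℝ → X := fun t => g ⌊t⌋₊ t
  have hγ : ∀ k : ℤ, EqOn γ (g k.toNat) (Icc k (k + 1)) := by
    rintro k t ⟨hkt, htk⟩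
    rcases htk.lt_or_eq with htk | rfl
    · simp only [γ, ← Int.floor_toNat, Int.floor_eq_iff.2 ⟨hkt, htk⟩]
    rcases lt_or_ge k 0 with hk | hk
    · have hk' : (k : ℝ) + 1 ≤ 0 := by exact_mod_cast hk
      simp only [γ, Nat.floor_of_nonpos hk', Int.toNat_of_nonpos hk.le]
    · lift k to ℕ using hk
      simp only [γ, Int.toNat_natCast, Int.cast_natCast]
      rw [hg_right, ← Nat.cast_add_one, Nat.floor_natCast, hg_left]
  refine ⟨γ, ?_, fun t => hP _ _⟩
  refine (locallyFinite_Icc_of_tendsto tendsto_intCast_atTop_atTop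
    (tendsto_atBot_add_const_right _ 1 (tendsto_intCast_atBot_iff.2 tendsto_id))).continuous
    (iUnion_eq_univ_iff.2 fun t => ⟨⌊t⌋, Int.floor_le t, (Int.lt_floor_add_one t).le⟩)
    (fun _ => isClosed_Icc) fun k => (hg k.toNat).continuousOn.congr (hγ k)

theorem infinity_accessible_general (U : Set ℂ) (hUo : IsOpen U)
    (A : Set ℂ) (hAU : A ⊆ U) (hAcl : IsClosed A) (hAconn : IsConnected A)
    (hAub : ¬ Bornology.IsBounded A) :
    ∃ γ : ℝ → ℂ, ContinuousOn γ (Set.Ici 0) ∧ (∀ t ∈ Set.Ici (0:ℝ), γ t ∈ U) ∧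
      Tendsto (fun t => ‖γ t‖) atTop atTop := by
  obtain ⟨B, hBanti, hB⟩ := exists_antitone_isConnected_subset_diff hAcl hAconn
    (fun h => hAub h.isBounded) fun n => isCompact_closedBall (0 : ℂ) n
  have hBfar : ∀ n : ℕ, B n ⊆ U ∩ {z | (n : ℝ) < ‖z‖} := fun n z hz =>
    ⟨hAU ((hB n).1 hz).1, by simpa using ((hB n).1 hz).2⟩
  choose c hc using fun n => (hB n).2.nonempty
  obtain ⟨γ, hγ, hγU⟩ := exists_continuous_mem_floor_of_joinedIn fun n =>
    joinedIn_of_isPreconnected_of_isOpen (hB n).2.isPreconnected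
      (hUo.inter (isOpen_lt continuous_const continuous_norm)) (hBfar n) (hc n)
      (hBanti n.le_succ (hc (n + 1)))
  refine ⟨γ, hγ.continuousOn, fun t _ => (hγU t).1, tendsto_atTop_mono (fun t => ?_)
    (tendsto_atTop_add_const_right atTop (-1) tendsto_id)⟩
  have hγt : (⌊t⌋₊ : ℝ) < ‖γ t‖ := (hγU t).2
  show t + -1 ≤ ‖γ t‖
  linarith [Nat.lt_floor_add_one t]

/-- If a domain `U ⊆ ℂ` contains an unbounded closed connected set `A`,
then `∞` is accessible from `U`: there is a curve in `U` tending to `∞`. -/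
theorem infinity_accessible (U : Set ℂ) (hUo : IsOpen U) (hUc : IsConnected U)
    (A : Set ℂ) (hAU : A ⊆ U) (hAcl : IsClosed A) (hAconn : IsConnected A)
    (hAub : ¬ Bornology.IsBounded A) :
    ∃ γ : ℝ → ℂ, ContinuousOn γ (Set.Ici 0) ∧ (∀ t ∈ Set.Ici (0:ℝ), γ t ∈ U) ∧
      Tendsto (fun t => ‖γ t‖) atTop atTop :=
  infinity_accessible_general U hUo A hAU hAcl hAconn hAub
end

section
/- Let $f\in\mathcal{B}$ and let $A\subset\mathbb{C}$ be an extendable set. Then there exists $T>0$ such that every connected component of $\{z\in A\cap f^{-1}(A): |z|\geq T\}$ is contained in a single fundamental domain of $f$; consequently, if $C\subset A\cap f^{-1}(A)$ is connected and meets the disk of radius $T$, then $C\setminus\mathbb{D}_T(0)$ is contained in finitely many fundamental domains. -/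
open Filter Topology Set

noncomputable section

/-- The critical values of an entire function. -/
def CriticalValues (f : ℂ → ℂ) : Set ℂ := f '' {z | deriv f z = 0}

/-- The (finite) asymptotic values of an entire function: limits of `f` along
curves tending to infinity. -/
def AsymptoticValues (f : ℂ → ℂ) : Set ℂ :=
  {a | ∃ γ : ℝ → ℂ, Continuous γ ∧
    Tendsto (fun t => ‖γ t‖) atTop atTop ∧
    Tendsto (fun t => f (γ t)) atTop (𝓝 a)}

/-- The set of singular values `S(f)`: the closure of the set of critical and
asymptotic values. -/
def SingularValues (f : ℂ → ℂ) : Set ℂ :=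
  closure (CriticalValues f ∪ AsymptoticValues f)

/-- An entire function is transcendental if it is not a polynomial. -/
def TranscendentalEntire (f : ℂ → ℂ) : Prop :=
  ¬ ∃ p : Polynomial ℂ, ∀ z, f z = p.eval z

/-- The Eremenko–Lyubich class `𝓑`: transcendental entire functions with
bounded set of singular values. -/
def EremenkoLyubich (f : ℂ → ℂ) : Prop :=
  Differentiable ℂ f ∧ TranscendentalEntire f ∧ Bornology.IsBounded (SingularValues f)

/-- Data for cutting the tracts of `f` into fundamental domains: `K` exceeds
`|f 0|` and all singular values, and `Γ` is a closed connected unbounded curve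
in `{|z| ≥ K}` meeting `{|z| = K}` and disjoint from all tracts
(i.e. from `f ⁻¹' {|z| > K}`). -/
def IsCuttingCurve (f : ℂ → ℂ) (K : ℝ) (Γ : Set ℂ) : Prop :=
  ‖f 0‖ < K ∧ (∀ s ∈ SingularValues f, ‖s‖ < K) ∧
  IsClosed Γ ∧ IsConnected Γ ∧ ¬ Bornology.IsBounded Γ ∧
  Γ ⊆ {z : ℂ | K ≤ ‖z‖} ∧ (∃ z ∈ Γ, ‖z‖ = K) ∧
  Γ ∩ f ⁻¹' {z : ℂ | K < ‖z‖} = ∅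

/-- A fundamental domain of `f` (relative to the cutting data `K`, `Γ`): a
connected component of `f ⁻¹' ({|z| > K} \ Γ)`. -/
def IsFundamentalDomain (f : ℂ → ℂ) (K : ℝ) (Γ F : Set ℂ) : Prop :=
  ∃ z₀ ∈ F, F = connectedComponentIn (f ⁻¹' ({z : ℂ | K < ‖z‖} \ Γ)) z₀

/-- A set `A ⊆ ℂ` is extendable for `f` if `|f(z)| → ∞` as `z → ∞` in `A`. -/
def Extendable (f : ℂ → ℂ) (A : Set ℂ) : Prop :=
  ∀ z : ℕ → ℂ, (∀ n, z n ∈ A) →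
    Tendsto (fun n => ‖z n‖) atTop atTop →
    Tendsto (fun n => ‖f (z n)‖) atTop atTop


/-! Choose `Q > K` so that extendability, applied to `f z ∈ A`, puts every `z ∈ A ∩ f⁻¹(A)`
with `|f z| ≥ Q` into a fundamental domain, and `T` so that `|z| ≥ T` forces `|f z| > Q`;
the first claim follows at once. For the second, let `V` be a fundamental domain met by
`C \ 𝔻_T(0)` but not containing `C`. Then `C` meets the frontier of the open set
`V ∩ {|f| > Q}` at some `ζ` with `|f ζ| ≥ Q`, so `ζ` lies in a fundamental domain, which must
be `V`; hence `|f ζ| = Q`. Extendability keeps all such `ζ` in one disk, so they lie in a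
single compact subset of the union of the fundamental domains, which meets only finitely
many of them. -/

section Topology

variable {X : Type*} [TopologicalSpace X]

theorem IsPreconnected.inter_frontier_nonempty {s t : Set X} (hs : IsPreconnected s)
    (hst : (s ∩ t).Nonempty) (hts : ¬ s ⊆ t) : (s ∩ frontier t).Nonempty := by
  by_contra hfr
  have hcover : s ⊆ interior t ∪ (closure t)ᶜ := by
    intro x hx
    by_cases hxt : x ∈ closure t
    · rw [closure_eq_interior_union_frontier] at hxt
      exact Or.inl (hxt.resolve_right fun h => hfr ⟨x, hx, h⟩)
    · exact Or.inr hxt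
  have hsint : (s ∩ interior t).Nonempty := by
    obtain ⟨x, hxs, hxt⟩ := hst
    exact ⟨x, hxs, (hcover hxs).resolve_right (not_not.2 (subset_closure hxt))⟩
  exact hts <| (hs.subset_left_of_subset_union isOpen_interior isClosed_closure.isOpen_compl
    (disjoint_compl_right.mono_left interior_subset_closure) hcover hsint).trans interior_subset

variable [LocallyConnectedSpace X] {U : Set X}

theorem connectedComponentIn_eq_of_mem_closure (hU : IsOpen U) {y z : X} (hz : z ∈ U)
    (hzy : z ∈ closure (connectedComponentIn U y)) :
    connectedComponentIn U z = connectedComponentIn U y := by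
  obtain ⟨w, hwz, hwy⟩ := mem_closure_iff.1 hzy _ hU.connectedComponentIn
    (mem_connectedComponentIn hz)
  rw [connectedComponentIn_eq hwz, connectedComponentIn_eq hwy]

theorem IsCompact.finite_image_connectedComponentIn (hU : IsOpen U) {Z : Set X}
    (hZ : IsCompact Z) (hZU : Z ⊆ U) : (connectedComponentIn U '' Z).Finite := by
  obtain ⟨t, -, hZt⟩ := hZ.elim_nhds_subcover (connectedComponentIn U) fun x hx =>
    hU.connectedComponentIn.mem_nhds (mem_connectedComponentIn (hZU hx))
  refine (t.finite_toSet.image (connectedComponentIn U)).subset ?_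
  rintro _ ⟨z, hz, rfl⟩
  obtain ⟨x, hx, hzx⟩ := mem_iUnion₂.1 (hZt hz)
  exact ⟨x, hx, connectedComponentIn_eq hzx⟩

theorem finite_image_connectedComponentIn_of_isPreconnected {β : Type*} [LinearOrder β]
    [TopologicalSpace β] [OrderClosedTopology β] (hU : IsOpen U) {Z C : Set X}
    (hZ : IsCompact Z) (hZU : Z ⊆ U) (hC : IsPreconnected C) {g : X → β} (hg : Continuous g)
    {Q : β} (hCU : ∀ z ∈ C, Q ≤ g z → z ∈ U) (hCZ : ∀ z ∈ C, g z = Q → z ∈ Z) :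
    (connectedComponentIn U '' {z ∈ C | Q < g z}).Finite := by
  have hexit : ∀ y ∈ C, Q < g y → ¬ C ⊆ connectedComponentIn U y →
      ∃ ζ ∈ Z, connectedComponentIn U ζ = connectedComponentIn U y := by
    intro y hyC hyQ hCy
    have hopen : IsOpen (connectedComponentIn U y ∩ {z | Q < g z}) :=
      hU.connectedComponentIn.inter (isOpen_lt continuous_const hg)
    obtain ⟨ζ, hζC, hζcl, hζt⟩ := hC.inter_frontier_nonempty
      (t := connectedComponentIn U y ∩ {z | Q < g z})
      ⟨y, hyC, mem_connectedComponentIn (hCU y hyC hyQ.le), hyQ⟩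
      (fun h => hCy (h.trans inter_subset_left))
    have hζQ : Q ≤ g ζ := closure_lt_subset_le continuous_const hg
      (closure_mono inter_subset_right hζcl)
    have hζU : ζ ∈ U := hCU ζ hζC hζQ
    have hζV := connectedComponentIn_eq_of_mem_closure hU hζU
      (closure_mono inter_subset_left hζcl)
    have hζV' : ζ ∈ connectedComponentIn U y := hζV ▸ mem_connectedComponentIn hζU
    have hζQ' : g ζ ≤ Q := not_lt.1 fun h => hζt (hopen.interior_eq.symm ▸ ⟨hζV', h⟩)
    exact ⟨ζ, hCZ ζ hζC (le_antisymm hζQ' hζQ), hζV⟩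
  by_cases hinside : ∃ y ∈ C, Q < g y ∧ C ⊆ connectedComponentIn U y
  · obtain ⟨y, -, -, hCy⟩ := hinside
    refine (finite_singleton (connectedComponentIn U y)).subset ?_
    rintro _ ⟨z, hz, rfl⟩
    exact (connectedComponentIn_eq (hCy hz.1)).symm
  · push Not at hinside
    refine (hZ.finite_image_connectedComponentIn hU hZU).subset ?_
    rintro _ ⟨y, ⟨hyC, hyQ⟩, rfl⟩
    exact hexit y hyC hyQ (hinside y hyC hyQ)

end Topology

section FundamentalDomains

variable {f : ℂ → ℂ} {K : ℝ} {Γ : Set ℂ}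

def fundamentalDomainUnion (f : ℂ → ℂ) (K : ℝ) (Γ : Set ℂ) : Set ℂ :=
  f ⁻¹' ({z : ℂ | K < ‖z‖} \ Γ)

theorem isOpen_fundamentalDomainUnion (hf : Continuous f) (hΓ : IsClosed Γ) :
    IsOpen (fundamentalDomainUnion f K Γ) :=
  ((isOpen_lt continuous_const continuous_norm).sdiff hΓ).preimage hf

theorem IsCuttingCurve.mem_fundamentalDomainUnion (hcut : IsCuttingCurve f K Γ) {z : ℂ}
    (h₁ : K < ‖f z‖) (h₂ : K < ‖f (f z)‖) : z ∈ fundamentalDomainUnion f K Γ :=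
  ⟨h₁, fun hΓ => eq_empty_iff_forall_notMem.1 hcut.2.2.2.2.2.2.2 (f z) ⟨hΓ, h₂⟩⟩

theorem isFundamentalDomain_connectedComponentIn {z : ℂ}
    (hz : z ∈ fundamentalDomainUnion f K Γ) :
    IsFundamentalDomain f K Γ (connectedComponentIn (fundamentalDomainUnion f K Γ) z) :=
  ⟨z, mem_connectedComponentIn hz, rfl⟩

theorem exists_fin_isFundamentalDomain_cover {S : Set ℂ}
    (hS : S ⊆ fundamentalDomainUnion f K Γ)
    (hfin : (connectedComponentIn (fundamentalDomainUnion f K Γ) '' S).Finite) :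
    ∃ (k : ℕ) (F : Fin k → Set ℂ),
      (∀ j, IsFundamentalDomain f K Γ (F j)) ∧ S ⊆ ⋃ j, F j := by
  obtain ⟨k, F, hF⟩ := hfin.fin_embedding
  refine ⟨k, F, fun j => ?_, fun z hz => ?_⟩
  · obtain ⟨z, hz, hzj⟩ : F j ∈ connectedComponentIn _ '' S := hF ▸ mem_range_self j
    exact hzj ▸ isFundamentalDomain_connectedComponentIn (hS hz)
  · obtain ⟨j, hj⟩ : connectedComponentIn _ z ∈ range F := hF.symm ▸ mem_image_of_mem _ hz
    exact mem_iUnion.2 ⟨j, hj ▸ mem_connectedComponentIn (hS hz)⟩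

end FundamentalDomains

theorem Extendable.exists_lt_norm_apply {f : ℂ → ℂ} {A : Set ℂ} (hA : Extendable f A)
    (M : ℝ) : ∃ R : ℝ, ∀ z ∈ A, R ≤ ‖z‖ → M < ‖f z‖ := by
  by_contra h
  push Not at h
  choose z hzA hzR hzM using fun n : ℕ => h n
  have hz : Tendsto (fun n => ‖z n‖) atTop atTop :=
    tendsto_atTop_mono hzR tendsto_natCast_atTop_atTop
  obtain ⟨n, hn⟩ := ((hA z hzA hz).eventually_gt_atTop M).exists
  exact (hzM n).not_gt hn

/-- For `f ∈ 𝓑` and an extendable set `A`, there is `T > 0` such that every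
connected component of `{z ∈ A ∩ f⁻¹(A) : |z| ≥ T}` is contained in a single
fundamental domain; consequently, any connected `C ⊆ A ∩ f⁻¹(A)` meeting
`𝔻_T(0)` has `C \ 𝔻_T(0)` contained in finitely many fundamental domains. -/
theorem extendable_in_finitely_many_fundamental_domains
    (f : ℂ → ℂ) (hf : EremenkoLyubich f) (A : Set ℂ) (hA : Extendable f A)
    (K : ℝ) (Γ : Set ℂ) (hcut : IsCuttingCurve f K Γ) :
    ∃ T > 0,
      (∀ z ∈ A ∩ f ⁻¹' A, T ≤ ‖z‖ →
        ∃ F : Set ℂ, IsFundamentalDomain f K Γ F ∧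
          connectedComponentIn {w ∈ A ∩ f ⁻¹' A | T ≤ ‖w‖} z ⊆ F) ∧
      ∀ C ⊆ A ∩ f ⁻¹' A, IsConnected C → (C ∩ Metric.ball (0 : ℂ) T).Nonempty →
        ∃ (k : ℕ) (F : Fin k → Set ℂ), (∀ j, IsFundamentalDomain f K Γ (F j)) ∧
          C \ Metric.ball (0 : ℂ) T ⊆ ⋃ j, F j := by
  have hfc : Continuous f := hf.1.continuous
  set U := fundamentalDomainUnion f K Γ
  have hU : IsOpen U := isOpen_fundamentalDomainUnion hfc hcut.2.2.1
  obtain ⟨R₁, hR₁⟩ := hA.exists_lt_norm_apply (K + 1)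
  set Q := max R₁ (K + 1)
  obtain ⟨R₂, hR₂⟩ := hA.exists_lt_norm_apply Q
  have hmoat : ∀ z ∈ A ∩ f ⁻¹' A, Q ≤ ‖f z‖ → K + 1 < ‖f (f z)‖ :=
    fun z hz hQ => hR₁ (f z) hz.2 ((le_max_left _ _).trans hQ)
  have hmemU : ∀ z ∈ A ∩ f ⁻¹' A, Q ≤ ‖f z‖ → z ∈ U := fun z hz hQ =>
    hcut.mem_fundamentalDomainUnion (by linarith [le_max_right R₁ (K + 1)])
      (by linarith [hmoat z hz hQ])
  have hfar : ∀ z ∈ A ∩ f ⁻¹' A, max R₂ 1 ≤ ‖z‖ → Q < ‖f z‖ := fun z hz hT =>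
    hR₂ z hz.1 ((le_max_left _ _).trans hT)
  refine ⟨max R₂ 1, lt_max_of_lt_right one_pos, fun z hz hzT => ?_, fun C hC hCconn _ => ?_⟩
  · refine ⟨_, isFundamentalDomain_connectedComponentIn (hmemU z hz (hfar z hz hzT).le), ?_⟩
    exact connectedComponentIn_mono z fun w hw => hmemU w hw.1 (hfar w hw.1 hw.2).le
  · set Z := Metric.closedBall 0 R₂ ∩ {z | K + 1 ≤ ‖f z‖ ∧ K + 1 ≤ ‖f (f z)‖}
    have hZ : IsCompact Z := (isCompact_closedBall 0 R₂).inter_right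
      ((isClosed_le continuous_const hfc.norm).inter
        (isClosed_le continuous_const (hfc.comp hfc).norm))
    have hZU : Z ⊆ U := fun z hz =>
      hcut.mem_fundamentalDomainUnion (by linarith [hz.2.1]) (by linarith [hz.2.2])
    have hCZ : ∀ z ∈ C, ‖f z‖ = Q → z ∈ Z := fun z hzC hzQ =>
      ⟨mem_closedBall_zero_iff.2 (not_lt.1 fun h => (hR₂ z (hC hzC).1 h.le).ne' hzQ),
        hzQ ▸ le_max_right _ _, (hmoat z (hC hzC) hzQ.ge).le⟩
    have hfin := finite_image_connectedComponentIn_of_isPreconnected hU hZ hZU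
      hCconn.isPreconnected hfc.norm (fun z hz => hmemU z (hC hz)) hCZ
    have hfarC : C \ Metric.ball 0 (max R₂ 1) ⊆ {z ∈ C | Q < ‖f z‖} := fun z hz =>
      ⟨hz.1, hfar z (hC hz.1) (by simpa using hz.2)⟩
    exact exists_fin_isFundamentalDomain_cover
      (fun z hz => hmemU z (hC (hfarC hz).1) (hfarC hz).2.le) (hfin.subset (image_mono hfarC))
end
end
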